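/- For every k ≥ 1 the operators E_k^* = Σ_{i=1}^n x_i (∂/∂y_i)^k and F_k^* = Σ_{i=1}^n y_i (∂/∂x_i)^k map the space of diagonal harmonics DH_n into itself. -/

import Mathlib

open MvPolynomial

/-- The polynomial ring `R = ℂ[x_1,…,x_n,y_1,…,y_n]`: the variable `x_i` is
`X (Sum.inl i)` and `y_i` is `X (Sum.inr i)`. -/
abbrev Rn (n : ℕ) : Type := MvPolynomial (Fin n ⊕ Fin n) ℂ

/-- The diagonal action of a permutation `σ ∈ S_n` on `R`, permuting the `x_i` and the
`y_i` simultaneously. -/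
noncomputable def permR (n : ℕ) (σ : Equiv.Perm (Fin n)) : Rn n →ₐ[ℂ] Rn n :=
  MvPolynomial.rename (Sum.map σ σ)

/-- A polynomial is symmetric if it is fixed by the diagonal `S_n`-action. -/
def IsSymP {n : ℕ} (f : Rn n) : Prop := ∀ σ : Equiv.Perm (Fin n), permR n σ f = f

/-- A polynomial is antisymmetric if every permutation acts on it by its sign. -/
def IsAntiSymP {n : ℕ} (f : Rn n) : Prop :=
  ∀ σ : Equiv.Perm (Fin n), permR n σ f = (Equiv.Perm.sign σ : ℤ) • f

/-- The ideal `I_+` generated by all symmetric polynomials with zero constant term. -/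
noncomputable def Iplus (n : ℕ) : Ideal (Rn n) :=
  Ideal.span {f | IsSymP f ∧ constantCoeff f = 0}

/-- The ideal `J` generated by all antisymmetric polynomials. -/
noncomputable def Jid (n : ℕ) : Ideal (Rn n) :=
  Ideal.span {f | IsAntiSymP f}

/-- The maximal homogeneous ideal `m = (x_1,…,x_n,y_1,…,y_n)`. -/
noncomputable def mId (n : ℕ) : Ideal (Rn n) :=
  Ideal.span (Set.range X)

/-- The operator `E_k = Σ_i y_i^k ∂/∂x_i`. -/
noncomputable def Eop (n k : ℕ) : Rn n →ₗ[ℂ] Rn n :=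
  ∑ i : Fin n,
    (LinearMap.mulLeft ℂ ((X (Sum.inr i) : Rn n) ^ k)) ∘ₗ (pderiv (Sum.inl i)).toLinearMap

/-- The operator `F_k = Σ_i x_i^k ∂/∂y_i`. -/
noncomputable def Fop (n k : ℕ) : Rn n →ₗ[ℂ] Rn n :=
  ∑ i : Fin n,
    (LinearMap.mulLeft ℂ ((X (Sum.inl i) : Rn n) ^ k)) ∘ₗ (pderiv (Sum.inr i)).toLinearMap

/-- The operator `E_k^* = Σ_i x_i (∂/∂y_i)^k`. -/
noncomputable def Estar (n k : ℕ) : Rn n →ₗ[ℂ] Rn n :=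
  ∑ i : Fin n,
    (LinearMap.mulLeft ℂ ((X (Sum.inl i) : Rn n))) ∘ₗ ((pderiv (Sum.inr i)).toLinearMap ^ k)

/-- The operator `F_k^* = Σ_i y_i (∂/∂x_i)^k`. -/
noncomputable def Fstar (n k : ℕ) : Rn n →ₗ[ℂ] Rn n :=
  ∑ i : Fin n,
    (LinearMap.mulLeft ℂ ((X (Sum.inr i) : Rn n))) ∘ₗ ((pderiv (Sum.inl i)).toLinearMap ^ k)

/-- The constant-coefficient differential operator `g(∂/∂x_1,…,∂/∂x_n,∂/∂y_1,…,∂/∂y_n)`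
obtained by substituting partial derivatives for the variables of `g`. -/
noncomputable def applyDeriv (n : ℕ) (g : Rn n) : Module.End ℂ (Rn n) :=
  ∑ s ∈ g.support, (MvPolynomial.coeff s g) •
    (((Finset.univ : Finset (Fin n ⊕ Fin n)).toList).map
      (fun j => ((pderiv j).toLinearMap : Module.End ℂ (Rn n)) ^ (s j))).prod

/-- The space of diagonal harmonics `DH_n`. -/
def DH (n : ℕ) : Set (Rn n) :=
  {f | ∀ g : Rn n, IsSymP g → constantCoeff g = 0 → applyDeriv n g f = 0}

/-- The Vandermonde determinant `Δ(x) = ∏_{i<j}(x_i − x_j)`. -/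
noncomputable def Dx (n : ℕ) : Rn n :=
  ∏ p ∈ Finset.univ.filter (fun p : Fin n × Fin n => p.1 < p.2),
    (X (Sum.inl p.1) - X (Sum.inl p.2))

/-- The Vandermonde determinant `Δ(y) = ∏_{i<j}(y_i − y_j)`. -/
noncomputable def Dy (n : ℕ) : Rn n :=
  ∏ p ∈ Finset.univ.filter (fun p : Fin n × Fin n => p.1 < p.2),
    (X (Sum.inr p.1) - X (Sum.inr p.2))

/-- Evaluation of a polynomial `φ` in `m` commuting variables on a family of `m`
pairwise commuting endomorphisms. -/
noncomputable def evalEndo {V : Type*} [AddCommMonoid V] [Module ℂ V] {m : ℕ}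
    (T : Fin m → Module.End ℂ V) (φ : MvPolynomial (Fin m) ℂ) : Module.End ℂ V :=
  ∑ s ∈ φ.support, (MvPolynomial.coeff s φ) •
    (((List.finRange m).map (fun j => (T j) ^ (s j))).prod)

/-- Weights recording the bigrading of `R`: an `x`-variable has bidegree `(1,0)` and a
`y`-variable has bidegree `(0,1)`. -/
def wtB (n : ℕ) : Fin n ⊕ Fin n → ℕ × ℕ :=
  Sum.elim (fun _ => ((1 : ℕ), (0 : ℕ))) (fun _ => ((0 : ℕ), (1 : ℕ)))

/-- Bihomogeneity of bidegree `d = (d_x, d_y)` with respect to the bigrading of `R`. -/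
def BiHom (n : ℕ) (f : Rn n) (d : ℕ × ℕ) : Prop :=
  MvPolynomial.IsWeightedHomogeneous (wtB n) f d

/-!
For a symmetric `g` with zero constant term, the Weyl-algebra relation
`[g(∂), x_j] = (∂g/∂x_j)(∂)`, together with the commutation of `g(∂)` with `∂/∂y_j`, gives
`g(∂) ∘ E_k^* = E_k^* ∘ g(∂) + (E_k g)(∂)`. The polarization `E_k g` is again symmetric and, as
`k ≥ 1`, has zero constant term, so both terms kill a diagonal harmonic. The same holds for `F_k^*`.
-/

open scoped IsMulCommutative

section PDeriv

variable {σ R : Type*} [CommSemiring R]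

theorem Derivation.toLinearMap_mul_mulLeft {A : Type*} [CommSemiring A] [Algebra R A]
    (D : Derivation R A A) (a : A) :
    D.toLinearMap * LinearMap.mulLeft R a =
      LinearMap.mulLeft R a * D.toLinearMap + LinearMap.mulLeft R (D a) := by
  ext f
  simp [D.leibniz, mul_comm]

theorem pderiv_pderiv_comm (i j : σ) (f : MvPolynomial σ R) :
    pderiv i (pderiv j f) = pderiv j (pderiv i f) := by
  classical
  induction f using MvPolynomial.induction_on with
  | C a => simp
  | add p q hp hq => simp [hp, hq]
  | mul_X p l h =>
    have hconst (i' j' : σ) :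
        pderiv i' (Pi.single (M := fun _ => MvPolynomial σ R) j' 1 l) = 0 := by
      rcases eq_or_ne j' l with rfl | hne <;> simp [*]
    simp only [pderiv_mul, map_add, h, pderiv_X, hconst, mul_zero, add_zero]
    ring

theorem commute_pderiv (i j : σ) :
    Commute ((pderiv i).toLinearMap : Module.End R (MvPolynomial σ R)) (pderiv j).toLinearMap :=
  LinearMap.ext fun f => pderiv_pderiv_comm i j f

variable (σ R) in
/-- `aeval` needs a commutative target: this subalgebra is one, `Module.End` is not. -/
noncomputable def constCoeffDiffOps : Subalgebra R (Module.End R (MvPolynomial σ R)) :=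
  Algebra.adjoin R (Set.range fun i : σ => (pderiv i).toLinearMap)

instance : IsMulCommutative (constCoeffDiffOps σ R) :=
  Algebra.isMulCommutative_adjoin R <| by
    rintro _ ⟨i, rfl⟩ _ ⟨j, rfl⟩
    exact commute_pderiv i j

/-- `g ↦ g(∂/∂X_1, …)`. -/
noncomputable def derivEval : MvPolynomial σ R →ₐ[R] Module.End R (MvPolynomial σ R) :=
  (constCoeffDiffOps σ R).val.comp
    (aeval fun i => ⟨(pderiv i).toLinearMap, Algebra.subset_adjoin ⟨i, rfl⟩⟩)

@[simp]
theorem derivEval_X (i : σ) : derivEval (X i : MvPolynomial σ R) = (pderiv i).toLinearMap := by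
  simp [derivEval]

theorem derivEval_monomial [Fintype σ] (s : σ →₀ ℕ) (c : R) :
    derivEval (monomial s c) =
      c • ((Finset.univ : Finset σ).toList.map fun i => (pderiv i).toLinearMap ^ s i).prod := by
  rw [derivEval, AlgHom.comp_apply, aeval_monomial, Finsupp.prod_fintype _ _ fun _ => pow_zero _,
    ← Finset.prod_map_toList, map_mul, AlgHom.commutes, map_list_prod, List.map_map,
    Algebra.algebraMap_eq_smul_one, smul_one_mul]
  rfl

theorem commute_derivEval (g h : MvPolynomial σ R) : Commute (derivEval g) (derivEval h) := by
  simp only [Commute, SemiconjBy, ← map_mul, mul_comm]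

theorem derivEval_mul_mulLeft_X (g : MvPolynomial σ R) (i : σ) :
    derivEval g * LinearMap.mulLeft R (X i) =
      LinearMap.mulLeft R (X i) * derivEval g + derivEval (pderiv i g) := by
  induction g using MvPolynomial.induction_on with
  | C a =>
    rw [pderiv_C, map_zero, add_zero, ← algebraMap_eq, AlgHom.commutes, Algebra.commutes]
  | add p q hp hq =>
    simp only [map_add, add_mul, mul_add, hp, hq]
    abel
  | mul_X p j h =>
    have hδ : LinearMap.mulLeft R (pderiv j (X i)) =
        derivEval (pderiv i (X j : MvPolynomial σ R)) := by
      rcases eq_or_ne i j with rfl | hne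
      · simp [Module.End.one_eq_id]
      · simp [pderiv_X_of_ne hne, pderiv_X_of_ne hne.symm]
    rw [map_mul, derivEval_X, mul_assoc, Derivation.toLinearMap_mul_mulLeft, mul_add,
      ← mul_assoc, h, pderiv_mul, map_add, map_mul, map_mul, derivEval_X, hδ]
    noncomm_ring

end PDeriv

theorem applyDeriv_eq_derivEval (n : ℕ) (g : Rn n) : applyDeriv n g = derivEval g := by
  conv_rhs => rw [g.as_sum]
  rw [map_sum]
  exact Finset.sum_congr rfl fun s _ => (derivEval_monomial s _).symm

theorem permR_pderiv {n : ℕ} (σ : Equiv.Perm (Fin n)) (j : Fin n ⊕ Fin n) (g : Rn n) :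
    permR n σ (pderiv j g) = pderiv (Sum.map σ σ j) (permR n σ g) :=
  (pderiv_rename (Sum.map_injective.mpr ⟨σ.injective, σ.injective⟩) j g).symm

section Polarization

variable {n : ℕ} (a b : Fin n → Fin n ⊕ Fin n) (k : ℕ)

/-- `Eop n k` and `Fop n k` are the cases `(a, b) = (inl, inr)` and `(inr, inl)`. -/
noncomputable def polarization : Rn n →ₗ[ℂ] Rn n :=
  ∑ i, LinearMap.mulLeft ℂ ((X (b i) : Rn n) ^ k) ∘ₗ (pderiv (a i)).toLinearMap

/-- `Estar n k` and `Fstar n k` are the cases `(a, b) = (inl, inr)` and `(inr, inl)`. -/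
noncomputable def polarizationStar : Rn n →ₗ[ℂ] Rn n :=
  ∑ i, LinearMap.mulLeft ℂ (X (a i) : Rn n) ∘ₗ (pderiv (b i)).toLinearMap ^ k

theorem polarization_apply (g : Rn n) :
    polarization a b k g = ∑ i, (X (b i) : Rn n) ^ k * pderiv (a i) g := by
  simp [polarization, LinearMap.sum_apply]

theorem derivEval_mul_polarizationStar (g : Rn n) :
    derivEval g * polarizationStar a b k =
      polarizationStar a b k * derivEval g + derivEval (polarization a b k g) := by
  simp only [polarizationStar, polarization_apply, map_sum, Finset.mul_sum, Finset.sum_mul,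
    ← Finset.sum_add_distrib]
  refine Finset.sum_congr rfl fun i _ => ?_
  have hpow : (pderiv (b i)).toLinearMap ^ k = derivEval ((X (b i) : Rn n) ^ k) := by
    rw [map_pow, derivEval_X]
  rw [hpow, ← Module.End.mul_eq_comp, ← mul_assoc, derivEval_mul_mulLeft_X, add_mul, mul_assoc,
    (commute_derivEval g _).eq, ← mul_assoc, ← map_mul, mul_comm (pderiv (a i) g)]

theorem IsSymP.polarization
    (ha : ∀ (σ : Equiv.Perm (Fin n)) (i : Fin n), Sum.map σ σ (a i) = a (σ i))
    (hb : ∀ (σ : Equiv.Perm (Fin n)) (i : Fin n), Sum.map σ σ (b i) = b (σ i))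
    {g : Rn n} (hg : IsSymP g) : IsSymP (polarization a b k g) := by
  intro σ
  simp only [polarization_apply, map_sum, map_mul, map_pow, permR_pderiv, hg σ]
  simp only [permR, rename_X, ha, hb]
  exact Equiv.sum_comp σ fun i => (X (b i) : Rn n) ^ k * pderiv (a i) g

variable {k} in
theorem constantCoeff_polarization (hk : 0 < k) (g : Rn n) :
    constantCoeff (polarization a b k g) = 0 := by
  simp [polarization_apply, zero_pow hk.ne']

variable {k} in
theorem polarizationStar_mem_DH
    (ha : ∀ (σ : Equiv.Perm (Fin n)) (i : Fin n), Sum.map σ σ (a i) = a (σ i))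
    (hb : ∀ (σ : Equiv.Perm (Fin n)) (i : Fin n), Sum.map σ σ (b i) = b (σ i))
    (hk : 0 < k) {f : Rn n} (hf : f ∈ DH n) : polarizationStar a b k f ∈ DH n := by
  intro g hg hg₀
  rw [applyDeriv_eq_derivEval, ← Module.End.mul_apply, derivEval_mul_polarizationStar,
    LinearMap.add_apply, Module.End.mul_apply, ← applyDeriv_eq_derivEval, ← applyDeriv_eq_derivEval,
    hf g hg hg₀, map_zero, zero_add]
  exact hf _ (hg.polarization a b k ha hb) (constantCoeff_polarization a b hk g)

end Polarization

theorem stmt9_general (n : ℕ) :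
    ∀ k : ℕ, 1 ≤ k → ∀ f ∈ DH n, Estar n k f ∈ DH n ∧ Fstar n k f ∈ DH n := fun _ hk _ hf =>
  ⟨polarizationStar_mem_DH Sum.inl Sum.inr (fun _ _ => rfl) (fun _ _ => rfl) hk hf,
    polarizationStar_mem_DH Sum.inr Sum.inl (fun _ _ => rfl) (fun _ _ => rfl) hk hf⟩

theorem stmt9 (n : ℕ) (hn : 1 ≤ n) :
    ∀ k : ℕ, 1 ≤ k → ∀ f ∈ DH n, Estar n k f ∈ DH n ∧ Fstar n k f ∈ DH n :=
  stmt9_general n
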